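/- Let (X_n, A_n)_{n∈ℕ} be measurable spaces and (κ_n : ∏_{i≤n} X_i ⇝ X_{n+1})_{n∈ℕ} Markov kernels. For all a ≤ b in ℕ, the composition of the trajectory kernel ξ_b with the partial-trajectory kernel η_{a,b} equals the trajectory kernel ξ_a: ξ_b ∘ η_{a,b} = ξ_a (as Markov kernels from ∏_{i≤a} X_i to ∏_{n∈ℕ} X_n). -/

import Mathlib

open MeasureTheory ProbabilityTheory Preorder Filter
open scoped ENNReal ProbabilityTheory Topology

variable {X : ℕ → Type*} [∀ n, MeasurableSpace (X n)]

/-- Canonical map gluing a trajectory up to time `b` with a point of `X (b + 1)` into a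
trajectory up to time `b + 1`. -/
def IicProdSucc (b : ℕ) (p : (Π i : Finset.Iic b, X i) × X (b + 1)) :
    Π i : Finset.Iic (b + 1), X i :=
  fun i ↦ if h : i.1 ≤ b then p.1 ⟨i.1, Finset.mem_Iic.2 h⟩
    else cast (congrArg X (Nat.le_antisymm (Finset.mem_Iic.1 i.2)
      (Nat.lt_of_not_le h))).symm p.2

/-- The partial trajectory kernel `η_{a,b}` built from the kernels `κ n`: for `b ≤ a` it is the
deterministic kernel given by the restriction map, and `η_{a,b+1}` is obtained from `η_{a,b}` by
composing with the product of the identity kernel and `κ b`. -/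
noncomputable def partialTraj (κ : ∀ n, Kernel (Π i : Finset.Iic n, X i) (X (n + 1))) (a : ℕ) :
    (b : ℕ) → Kernel (Π i : Finset.Iic a, X i) (Π i : Finset.Iic b, X i)
  | 0 => Kernel.deterministic (frestrictLe₂ (Nat.zero_le a)) (measurable_frestrictLe₂ _)
  | b + 1 =>
    if h : b + 1 ≤ a then Kernel.deterministic (frestrictLe₂ h) (measurable_frestrictLe₂ h)
    else ((Kernel.id ×ₖ κ b) ∘ₖ partialTraj κ a b).map (IicProdSucc b)

/-! The trajectory kernels are determined by their finite-dimensional marginals, so once the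
recursion defining `partialTraj` is seen to agree with Mathlib's `Kernel.partialTraj` (the one-step
kernels differ only by identifying `X (b + 1)` with `Π i : Ioc b (b + 1), X i`), Ionescu–Tulcea
uniqueness identifies each `ξ n` with `Kernel.traj κ n`. The claim is then the limit of the
Chapman–Kolmogorov relation `η_{b,c} ∘ η_{a,b} = η_{a,c}`, i.e. `Kernel.traj_comp_partialTraj`. -/

open Finset

lemma IicProdIoc_comp_prodMap_piSingleton (b : ℕ) :
    IicProdIoc (X := X) b (b + 1) ∘ Prod.map id (MeasurableEquiv.piSingleton b) =
      IicProdSucc b := by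
  ext p ⟨i, hi⟩
  by_cases h : i ≤ b
  · simp [IicProdIoc, IicProdSucc, h]
  · obtain rfl : i = b + 1 := Nat.le_antisymm (mem_Iic.1 hi) (Nat.lt_of_not_le h)
    simp [IicProdIoc, IicProdSucc, MeasurableEquiv.piSingleton]

lemma id_prod_map_piSingleton_map_IicProdIoc (b : ℕ)
    (κ : Kernel (Π i : Iic b, X i) (X (b + 1))) [IsSFiniteKernel κ] :
    (Kernel.id ×ₖ κ.map (MeasurableEquiv.piSingleton b)).map (IicProdIoc b (b + 1)) =
      (Kernel.id ×ₖ κ).map (IicProdSucc b) := by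
  conv_lhs => rw [← Kernel.map_id Kernel.id]
  rw [Kernel.map_prod_map _ _ measurable_id (by fun_prop),
    ← Kernel.map_comp_right _ (by fun_prop) measurable_IicProdIoc,
    IicProdIoc_comp_prodMap_piSingleton]

lemma partialTraj_eq_kernel_partialTraj (κ : ∀ n, Kernel (Π i : Iic n, X i) (X (n + 1)))
    [∀ n, IsSFiniteKernel (κ n)] (a b : ℕ) :
    partialTraj κ a b = Kernel.partialTraj κ a b := by
  induction b with
  | zero => rw [Kernel.partialTraj_zero]; rfl
  | succ b ih =>
    by_cases hba : b + 1 ≤ a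
    · rw [partialTraj, dif_pos hba, Kernel.partialTraj_le hba]
    · rw [partialTraj, dif_neg hba, Kernel.partialTraj_succ_of_le (by omega), ih,
        Kernel.map_comp, Kernel.map_comp, id_prod_map_piSingleton_map_IicProdIoc]

/-- For `a ≤ b`, composing the trajectory kernel `ξ_b` with the partial trajectory kernel
`η_{a,b}` gives the trajectory kernel `ξ_a`. Here the trajectory kernels `ξ` are
characterized by the fact that the pushforward of `ξ_a` under each restriction map `π_b` is
`η_{a,b}`. -/
theorem traj_comp_partialTraj (κ : ∀ n, Kernel (Π i : Finset.Iic n, X i) (X (n + 1)))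
    [∀ n, IsMarkovKernel (κ n)]
    (ξ : ∀ n : ℕ, Kernel (Π i : Finset.Iic n, X i) (Π n, X n))
    (hchar : ∀ n b : ℕ, (ξ n).map (frestrictLe b) = partialTraj κ n b)
    {a b : ℕ} (hab : a ≤ b) :
    ξ b ∘ₖ partialTraj κ a b = ξ a := by
  have hξ_traj : ∀ n, ξ n = Kernel.traj κ n := fun n ↦
    Kernel.eq_traj κ _ fun b ↦ by rw [hchar, partialTraj_eq_kernel_partialTraj]
  rw [hξ_traj, hξ_traj, partialTraj_eq_kernel_partialTraj, Kernel.traj_comp_partialTraj hab]
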